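/- In the variable gadget for x ∈ X with the nodes t_{x,1}, t_{x,2} removed (withheld by the leader), the maximum total number of gadget nodes coverable by directed cycles of length at most 3 lying inside the gadget is 6, attained exactly by the two 3-cycles {α_{x,i}, β_{x,f,i}, f_{x,i}}, i = 1,2 (the consistent packing); and if additionally both β_{x,f,1} and β_{x,f,2} are excluded, the maximum is 2, attained by the 2-cycle {f_{x,1}, f_{x,2}}. -/

import Mathlib

/-!
Once `t_{x,1}, t_{x,2}` are withheld, the only cycles of length at most 3 left in the gadget are
the 2-cycle `f_{x,1} f_{x,2}` and the two triangles `α_{x,i} β_{x,f,i} f_{x,i}`, all inside a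
six-node set. A packing covering six nodes therefore covers both `β_{x,f,i}`, and the only
available cycle through `β_{x,f,i}` is the `i`-th triangle. Withholding the `β_{x,f,i}` as well
leaves only the 2-cycle.
-/

variable {V : Type*} [DecidableEq V]

/-- A directed (simple) cycle given as a list of distinct vertices. -/
def IsDicycle (A : V → V → Prop) (c : List V) : Prop :=
  2 ≤ c.length ∧ c.Nodup ∧ c.Chain' A ∧
    ∀ h : c ≠ [], A (c.getLast h) (c.head h)

def cycVerts (c : List V) : Set V := {v | v ∈ c}

/-- A `K`-cycle packing inside the vertex set `W`. -/
def IsCyclePackingOn (A : V → V → Prop) (K : ℕ) (W : Set V) (P : Finset (List V)) : Prop :=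
  (∀ c ∈ P, IsDicycle A c ∧ c.length ≤ K ∧ ∀ v ∈ c, v ∈ W) ∧
  (P : Set (List V)).Pairwise fun c d => ∀ v, v ∈ c → v ∉ d

def packSize (P : Finset (List V)) : ℕ := ∑ c ∈ P, c.length

def pcovered (P : Finset (List V)) : Set V := {v | ∃ c ∈ P, v ∈ c}

/-- Maximum size of a `K`-cycle packing on `G[W]`. -/
noncomputable def wDir (A : V → V → Prop) (K : ℕ) (W : Set V) : ℕ :=
  sSup {n | ∃ P, IsCyclePackingOn A K W P ∧ packSize P = n}

/-- Minimum number of `L`-nodes covered over all maximum `K`-cycle packings on `G[W]`. -/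
noncomputable def wLDir (A : V → V → Prop) (K : ℕ) (L W : Set V) : ℕ :=
  sInf {k | ∃ P, IsCyclePackingOn A K W P ∧ packSize P = wDir A K W ∧
    (pcovered P ∩ L).ncard = k}

/-- The ten nodes of the variable gadget for `x ∈ X`. -/
inductive XV : Type
  | t1 | t2 | f1 | f2 | al1 | al2 | bt1 | bt2 | bf1 | bf2
deriving DecidableEq

open XV in
instance : Fintype XV where
  elems := {t1, t2, f1, f2, al1, al2, bt1, bt2, bf1, bf2}
  complete := fun x => by cases x <;> simp

open XV in
/-- The arc set `A_x` of the `x`-gadget. -/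
def xArc : XV → XV → Prop := fun u v =>
  (u, v) ∈ ({(al1, bt1), (bt1, t1), (t1, al1), (al2, bt2), (bt2, t2), (t2, al2),
             (al1, bf1), (bf1, f1), (f1, al1), (al2, bf2), (bf2, f2), (f2, al2),
             (t1, t2), (t2, t1), (f1, f2), (f2, f1)} : Set (XV × XV))

/-- `P` contains a cycle whose vertex set is exactly `s`. -/
def hasCyc (P : Finset (List XV)) (s : Set XV) : Prop := ∃ c ∈ P, cycVerts c = s

theorem isDicycle_pair_iff {α : Type*} {A : α → α → Prop} {a b : α} :
    IsDicycle A [a, b] ↔ a ≠ b ∧ A a b ∧ A b a := by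
  change _ ∧ _ ∧ List.IsChain A [a, b] ∧ _ ↔ _
  simp [and_comm]

theorem isDicycle_triple_iff {α : Type*} {A : α → α → Prop} {a b d : α} :
    IsDicycle A [a, b, d] ↔ [a, b, d].Nodup ∧ A a b ∧ A b d ∧ A d a := by
  change _ ∧ _ ∧ List.IsChain A [a, b, d] ∧ _ ↔ _
  simp [and_assoc]

theorem IsCyclePackingOn.mono {α : Type*} {A : α → α → Prop} {K : ℕ} {W W' : Set α}
    {P : Finset (List α)} (hP : IsCyclePackingOn A K W P) (hW : W ⊆ W') :
    IsCyclePackingOn A K W' P :=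
  ⟨fun c hc => ⟨(hP.1 c hc).1, (hP.1 c hc).2.1, fun v hv => hW ((hP.1 c hc).2.2 v hv)⟩, hP.2⟩

theorem wDir_eq_of_forall_packSize_le {α : Type*} {A : α → α → Prop} {K : ℕ} {W : Set α}
    {P : Finset (List α)} (hP : IsCyclePackingOn A K W P)
    (hle : ∀ Q, IsCyclePackingOn A K W Q → packSize Q ≤ packSize P) :
    wDir A K W = packSize P := by
  have hub : packSize P ∈ upperBounds {n | ∃ Q, IsCyclePackingOn A K W Q ∧ packSize Q = n} := by
    rintro n ⟨Q, hQ, rfl⟩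
    exact hle Q hQ
  exact le_antisymm (csSup_le ⟨_, P, hP, rfl⟩ hub) (le_csSup ⟨_, hub⟩ ⟨P, hP, rfl⟩)

section Packing

variable {A : V → V → Prop} {K : ℕ} {W : Set V} {P : Finset (List V)}

theorem IsCyclePackingOn.packSize_eq_card_biUnion (hP : IsCyclePackingOn A K W P) :
    packSize P = (P.biUnion List.toFinset).card := by
  rw [Finset.card_biUnion fun c hc d hd hcd =>
    Finset.disjoint_left.mpr fun v hv => by simpa using hP.2 hc hd hcd v (by simpa using hv)]
  exact Finset.sum_congr rfl fun c hc => (List.toFinset_card_of_nodup (hP.1 c hc).1.2.1).symm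

theorem IsCyclePackingOn.packSize_le_card (hP : IsCyclePackingOn A K W P) {S : Finset V}
    (hS : ∀ c ∈ P, c.toFinset ⊆ S) : packSize P ≤ S.card :=
  hP.packSize_eq_card_biUnion ▸ Finset.card_le_card (Finset.biUnion_subset.mpr hS)

theorem IsCyclePackingOn.exists_mem_of_packSize_eq_card (hP : IsCyclePackingOn A K W P)
    {S : Finset V} (hS : ∀ c ∈ P, c.toFinset ⊆ S) (hsize : packSize P = S.card) {v : V}
    (hv : v ∈ S) : ∃ c ∈ P, v ∈ c := by
  have hcover : P.biUnion List.toFinset = S :=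
    Finset.eq_of_subset_of_card_le (Finset.biUnion_subset.mpr hS)
      (hsize ▸ hP.packSize_eq_card_biUnion).le
  rw [← hcover] at hv
  simpa using hv

end Packing

theorem hasCyc_of_mem {P : Finset (List XV)} {c : List XV} (hc : c ∈ P) {s : Finset XV}
    (hs : c.toFinset = s) : hasCyc P s :=
  ⟨c, hc, by ext; simp [cycVerts, ← hs]⟩

namespace XV

instance : DecidableRel xArc := fun u v =>
  decidable_of_iff ((u, v) ∈ ([(al1, bt1), (bt1, t1), (t1, al1), (al2, bt2), (bt2, t2), (t2, al2),
             (al1, bf1), (bf1, f1), (f1, al1), (al2, bf2), (bf2, f2), (f2, al2),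
             (t1, t2), (t2, t1), (f1, f2), (f2, f1)] : List (XV × XV))) (by simp [xArc])

theorem toFinset_cases_of_isDicycle_xArc {c : List XV} (hc : IsDicycle xArc c)
    (hlen : c.length ≤ 3) (ht1 : t1 ∉ c) (ht2 : t2 ∉ c) :
    c.toFinset = {f1, f2} ∨ c.toFinset = {al1, bf1, f1} ∨ c.toFinset = {al2, bf2, f2} := by
  have hlen2 := hc.1
  rcases c with _ | ⟨a, _ | ⟨b, _ | ⟨d, _ | ⟨e, l⟩⟩⟩⟩
  · simp at hlen2
  · simp at hlen2
  · rw [isDicycle_pair_iff] at hc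
    revert a b; decide
  · rw [isDicycle_triple_iff] at hc
    clear hlen hlen2
    revert a b d; decide
  · simp only [List.length_cons] at hlen
    omega

section GadgetPackings

variable {P : Finset (List XV)} {c : List XV}

theorem toFinset_cases_of_mem_packing (hP : IsCyclePackingOn xArc 3 ({t1, t2}ᶜ : Set XV) P)
    (hc : c ∈ P) :
    c.toFinset = {f1, f2} ∨ c.toFinset = {al1, bf1, f1} ∨ c.toFinset = {al2, bf2, f2} := by
  obtain ⟨hcyc, hlen, hW⟩ := hP.1 c hc
  exact toFinset_cases_of_isDicycle_xArc hcyc hlen (fun h => by simpa using hW t1 h)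
    (fun h => by simpa using hW t2 h)

theorem toFinset_subset_of_mem_packing (hP : IsCyclePackingOn xArc 3 ({t1, t2}ᶜ : Set XV) P)
    (hc : c ∈ P) : c.toFinset ⊆ {f1, f2, al1, bf1, al2, bf2} := by
  rcases toFinset_cases_of_mem_packing hP hc with h | h | h <;> rw [h] <;> decide

theorem toFinset_eq_of_bf1_mem (hP : IsCyclePackingOn xArc 3 ({t1, t2}ᶜ : Set XV) P)
    (hc : c ∈ P) (hbf : bf1 ∈ c) : c.toFinset = {al1, bf1, f1} := by
  rw [← List.mem_toFinset] at hbf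
  rcases toFinset_cases_of_mem_packing hP hc with h | h | h <;> rw [h] at hbf ⊢ <;> simp at hbf

theorem toFinset_eq_of_bf2_mem (hP : IsCyclePackingOn xArc 3 ({t1, t2}ᶜ : Set XV) P)
    (hc : c ∈ P) (hbf : bf2 ∈ c) : c.toFinset = {al2, bf2, f2} := by
  rw [← List.mem_toFinset] at hbf
  rcases toFinset_cases_of_mem_packing hP hc with h | h | h <;> rw [h] at hbf ⊢ <;> simp at hbf

theorem toFinset_eq_f_pair_of_mem_packing
    (hP : IsCyclePackingOn xArc 3 ({t1, t2, bf1, bf2}ᶜ : Set XV) P) (hc : c ∈ P) :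
    c.toFinset = {f1, f2} := by
  have hP' := hP.mono (W' := ({t1, t2}ᶜ : Set XV)) (by intro v; simp +contextual)
  have hbf1 : bf1 ∉ c := fun h => by simpa using (hP.1 c hc).2.2 bf1 h
  have hbf2 : bf2 ∉ c := fun h => by simpa using (hP.1 c hc).2.2 bf2 h
  rcases toFinset_cases_of_mem_packing hP' hc with h | h | h
  · exact h
  · exact (hbf1 (by simp [← List.mem_toFinset, h])).elim
  · exact (hbf2 (by simp [← List.mem_toFinset, h])).elim

end GadgetPackings

def consistentPacking : Finset (List XV) := {[al1, bf1, f1], [al2, bf2, f2]}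

theorem isCyclePackingOn_consistentPacking :
    IsCyclePackingOn xArc 3 ({t1, t2}ᶜ : Set XV) consistentPacking := by
  refine ⟨fun c hc => ?_, by simp [consistentPacking, Set.pairwise_insert]⟩
  simp only [consistentPacking, Finset.mem_insert, Finset.mem_singleton] at hc
  rcases hc with rfl | rfl <;> exact ⟨isDicycle_triple_iff.2 (by decide), le_rfl, by decide⟩

theorem isCyclePackingOn_f_pair :
    IsCyclePackingOn xArc 3 ({t1, t2, bf1, bf2}ᶜ : Set XV) {[f1, f2]} := by
  refine ⟨fun c hc => ?_, by simp⟩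
  rw [Finset.mem_singleton.1 hc]
  exact ⟨isDicycle_pair_iff.2 (by decide), by decide, by decide⟩

end XV

open XV in
/-- with `t_{x,1}, t_{x,2}` withheld, the maximum 3-cycle packing in the
`x`-gadget covers 6 nodes, attained exactly by the consistent packing consisting of the
two triangles `{α_i, β_{f,i}, f_i}`; with `β_{f,1}, β_{f,2}` also excluded, the maximum
is 2, attained exactly by the 2-cycle `{f_1, f_2}`. -/
theorem stmt7 :
    wDir xArc 3 ({t1, t2}ᶜ : Set XV) = 6 ∧
    (∀ P, IsCyclePackingOn xArc 3 ({t1, t2}ᶜ : Set XV) P → packSize P = 6 →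
      hasCyc P {al1, bf1, f1} ∧ hasCyc P {al2, bf2, f2}) ∧
    wDir xArc 3 ({t1, t2, bf1, bf2}ᶜ : Set XV) = 2 ∧
    (∀ P, IsCyclePackingOn xArc 3 ({t1, t2, bf1, bf2}ᶜ : Set XV) P → packSize P = 2 →
      hasCyc P {f1, f2}) := by
  refine ⟨?_, fun P hP h6 => ⟨?_, ?_⟩, ?_, fun P hP h2 => ?_⟩
  · exact wDir_eq_of_forall_packSize_le isCyclePackingOn_consistentPacking fun Q hQ =>
      hQ.packSize_le_card fun _ => toFinset_subset_of_mem_packing hQ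
  · obtain ⟨c, hc, hbf⟩ := hP.exists_mem_of_packSize_eq_card
      (fun _ => toFinset_subset_of_mem_packing hP) h6 (v := bf1) (by decide)
    simpa using hasCyc_of_mem hc (toFinset_eq_of_bf1_mem hP hc hbf)
  · obtain ⟨c, hc, hbf⟩ := hP.exists_mem_of_packSize_eq_card
      (fun _ => toFinset_subset_of_mem_packing hP) h6 (v := bf2) (by decide)
    simpa using hasCyc_of_mem hc (toFinset_eq_of_bf2_mem hP hc hbf)
  · exact wDir_eq_of_forall_packSize_le isCyclePackingOn_f_pair fun Q hQ =>
      hQ.packSize_le_card fun _ hc => (toFinset_eq_f_pair_of_mem_packing hQ hc).le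
  · obtain ⟨c, hc, -⟩ := hP.exists_mem_of_packSize_eq_card
      (fun _ hc => (toFinset_eq_f_pair_of_mem_packing hP hc).le) h2 (v := f1) (by decide)
    simpa using hasCyc_of_mem hc (toFinset_eq_f_pair_of_mem_packing hP hc)
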